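/- arXiv:1401.4368 — 2 statements merged into one kernel-verified Lean document; each statement's English description precedes it below -/
import Mathlib

section
/- For every integer n ≥ 8, the product of all primes p ≤ n satisfies ∏_{p ≤ n} p < 4^n/√(54·(n+1)^3). -/
/-!
Strong induction on `n`, along the lines of the classical proof of `primorial n ≤ 4 ^ n`.
Passing from an odd `n - 1` to `n` leaves the primorial unchanged, and `(n + 1) ^ 3 ≤ 8 n ^ 3`
costs less than the factor `16`. For odd `n = 2m + 1` the primes in `(m + 1, 2m + 1]` divide
`(2m + 1).choose m`, so `2 · primorial n ≤ primorial (m + 1) · centralBinom (m + 1)`; since the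
central binomial coefficient grows at most fourfold per step, `32 · centralBinom k ^ 2 ≤ 16 ^ k`
holds from `k = 10` on, and together with `(n + 1) ^ 3 = 8 (m + 1) ^ 3` this closes the
induction. The cases `n ≤ 18` are computed.
-/

open Nat

lemma Nat.centralBinom_succ_le_four_mul (k : ℕ) : centralBinom (k + 1) ≤ 4 * centralBinom k :=
  Nat.le_of_mul_le_mul_left (c := k + 1)
    (calc (k + 1) * centralBinom (k + 1) = 2 * (2 * k + 1) * centralBinom k :=
          succ_mul_centralBinom_succ k
      _ ≤ (k + 1) * (4 * centralBinom k) := by nlinarith)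
    k.succ_pos

lemma Nat.centralBinom_add_le (k l : ℕ) : centralBinom (k + l) ≤ 4 ^ l * centralBinom k := by
  induction l with
  | zero => simp
  | succ l ih =>
    calc centralBinom (k + (l + 1)) ≤ 4 * centralBinom (k + l) := centralBinom_succ_le_four_mul _
      _ ≤ 4 * (4 ^ l * centralBinom k) := by gcongr
      _ = 4 ^ (l + 1) * centralBinom k := by ring

lemma Nat.thirty_two_mul_centralBinom_sq_le {k : ℕ} (hk : 10 ≤ k) :
    32 * centralBinom k ^ 2 ≤ 16 ^ k := by
  obtain ⟨l, rfl⟩ := exists_add_of_le hk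
  calc 32 * centralBinom (10 + l) ^ 2 ≤ 32 * (4 ^ l * centralBinom 10) ^ 2 := by
        gcongr; exact centralBinom_add_le 10 l
    _ = 16 ^ l * (32 * 184756 ^ 2) := by
        rw [show centralBinom 10 = 184756 by decide, show 16 = 4 ^ 2 by rfl, ← pow_mul]; ring
    _ ≤ 16 ^ l * 16 ^ 10 := by gcongr; norm_num
    _ = 16 ^ (10 + l) := by ring

lemma Nat.centralBinom_succ_eq_two_mul_choose (m : ℕ) :
    centralBinom (m + 1) = 2 * (2 * m + 1).choose m := by
  rw [centralBinom_eq_two_mul_choose, show 2 * (m + 1) = 2 * m + 1 + 1 by ring,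
    choose_succ_succ, choose_symm_half]; ring

lemma two_mul_primorial_two_mul_add_one_le (m : ℕ) :
    2 * primorial (2 * m + 1) ≤ primorial (m + 1) * centralBinom (m + 1) := by
  calc 2 * primorial (2 * m + 1) = 2 * primorial (m + 1 + m) := by
        rw [show 2 * m + 1 = m + 1 + m by ring]
    _ ≤ 2 * (primorial (m + 1) * (m + 1 + m).choose (m + 1)) := by
        gcongr; exact primorial_add_le m.le_succ
    _ = primorial (m + 1) * centralBinom (m + 1) := by
        rw [centralBinom_succ_eq_two_mul_choose, ← choose_symm_half,
          show m + 1 + m = 2 * m + 1 by ring]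
        ring

lemma primorial_sq_mul_lt {n : ℕ} (hn : 8 ≤ n) :
    primorial n ^ 2 * (54 * (n + 1) ^ 3) < 16 ^ n := by
  induction n using Nat.strong_induction_on with | h n ih =>
  rcases Nat.lt_or_ge n 19 with hsmall | hbig
  · interval_cases n <;> decide
  rcases n.even_or_odd' with ⟨m, rfl | rfl⟩
  · obtain ⟨k, rfl⟩ : ∃ k, m = k + 1 := ⟨m - 1, by omega⟩
    calc primorial (2 * (k + 1)) ^ 2 * (54 * (2 * (k + 1) + 1) ^ 3)
        = primorial (2 * k + 1) ^ 2 * (54 * (2 * k + 3) ^ 3) := by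
          rw [show 2 * (k + 1) = 2 * k + 1 + 1 by ring,
            primorial_succ (by omega) (odd_two_mul_add_one k)]
      _ ≤ primorial (2 * k + 1) ^ 2 * (54 * (2 * (2 * k + 1 + 1)) ^ 3) := by gcongr; omega
      _ = primorial (2 * k + 1) ^ 2 * (54 * (2 * k + 1 + 1) ^ 3) * 8 := by ring
      _ < 16 ^ (2 * k + 1) * 8 := by gcongr; exact ih _ (by omega) (by omega)
      _ ≤ 16 ^ (2 * (k + 1)) := by
          rw [show 2 * (k + 1) = 2 * k + 1 + 1 by ring, pow_succ]; omega
  · have hIH := ih (m + 1) (by omega) (by omega)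
    have hC := thirty_two_mul_centralBinom_sq_le (k := m + 1) (by omega)
    have hP := two_mul_primorial_two_mul_add_one_le m
    refine Nat.lt_of_mul_lt_mul_left (a := 4) ?_
    calc 4 * (primorial (2 * m + 1) ^ 2 * (54 * (2 * m + 1 + 1) ^ 3))
        = (2 * primorial (2 * m + 1)) ^ 2 * (54 * (m + 1) ^ 3) * 8 := by ring
      _ ≤ (primorial (m + 1) * centralBinom (m + 1)) ^ 2 * (54 * (m + 1 + 1) ^ 3) * 8 := by
          gcongr
          omega
      _ = primorial (m + 1) ^ 2 * (54 * (m + 1 + 1) ^ 3) * (8 * centralBinom (m + 1) ^ 2) := by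
          ring
      _ < 16 ^ (m + 1) * (4 * 16 ^ m) :=
          Nat.mul_lt_mul_of_lt_of_le hIH (by omega) (by positivity)
      _ = 4 * 16 ^ (2 * m + 1) := by ring

theorem stmt_12 (n : ℕ) (hn : 8 ≤ n) :
    ((∏ p ∈ (Finset.range (n + 1)).filter Nat.Prime, p : ℕ) : ℝ) <
      4 ^ n / Real.sqrt (54 * (n + 1) ^ 3) := by
  have key : ((primorial n : ℕ) : ℝ) ^ 2 * (54 * (n + 1) ^ 3) < 16 ^ n := by
    exact_mod_cast primorial_sq_mul_lt hn
  change (primorial n : ℝ) < _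
  rw [lt_div_iff₀ (by positivity)]
  refine lt_of_pow_lt_pow_left₀ 2 (by positivity) ?_
  rw [mul_pow, Real.sq_sqrt (by positivity), ← pow_mul, mul_comm n, pow_mul]
  exact key.trans_eq (by norm_num)
end

section
/- For every positive integer n, there exists a prime p with n < p ≤ 2n. -/
theorem stmt_19 (n : ℕ) (hn : 0 < n) :
    ∃ p : ℕ, p.Prime ∧ n < p ∧ p ≤ 2 * n := by
  exact Nat.bertrand n hn.ne'
end
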